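/- arXiv:2112.05294 — 4 statements merged into one kernel-verified Lean document; each statement's English description precedes it below -/
import Mathlib

section
/- Let ψ, φ : ℝⁿ → [0, ∞) be ℤⁿ-periodic Lipschitz functions such that {ψ = 0} ⊆ {φ = 0}. Then there exists a Lipschitz continuous function θ : [0, ∞) → [0, ∞) with θ(0) = 0, θ(s) > 0 for every s > 0, and θ'(s) > 0 for almost every s > 0, such that θ(φ(x)) ≤ ψ(x) for all x ∈ ℝⁿ. -/
open MeasureTheory Filter
open scoped ENNReal NNReal RealInnerProductSpace

noncomputable section

/-- Euclidean space `ℝⁿ`. -/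
abbrev Eucl (n : ℕ) := EuclideanSpace ℝ (Fin n)

/-- The point of `ℝⁿ` with integer coordinates `k`. -/
def intVec {n : ℕ} (k : Fin n → ℤ) : Eucl n := WithLp.toLp 2 (fun i => (k i : ℝ))

/-- `ℤⁿ`-periodicity. -/
def IsZPeriodic {n : ℕ} {α : Type*} (u : Eucl n → α) : Prop :=
  ∀ (x : Eucl n) (k : Fin n → ℤ), u (x + intVec k) = u x

/-!
Let `m s` be the infimum of `ψ` over `{s ≤ φ}`, capped at `1`. It is monotone, and positive for
`s > 0`: by periodicity the infimum may be taken over the compact set `{s ≤ φ}` ∩ [0,1]ⁿ, where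
`ψ > 0` because `ψ = 0` forces `φ = 0`. Then `θ s = ∫₀ˢ m t e⁻ᵗ dt` is `1`-Lipschitz on `[0, ∞)`,
positive, has derivative `m s e⁻ˢ > 0` at every continuity point `s > 0` of `m` (all but countably
many), and `θ s ≤ m s (1 - e⁻ˢ) ≤ m s`, so `θ (φ x) ≤ m (φ x) ≤ ψ x`.
-/

section Superlevel

variable {X : Type*} {ψ φ : X → ℝ}

/-- The cap `1` also replaces the junk value `sInf ∅ = 0` when `{s ≤ φ}` is empty. -/
def superlevelInf (ψ φ : X → ℝ) (s : ℝ) : ℝ :=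
  sInf (insert 1 (ψ '' {x | s ≤ φ x}))

lemma bddBelow_insert_image (hψ : ∀ x, 0 ≤ ψ x) (s : ℝ) :
    BddBelow (insert 1 (ψ '' {x | s ≤ φ x})) :=
  ⟨0, by rintro _ (rfl | ⟨x, -, rfl⟩) <;> simp [hψ]⟩

lemma superlevelInf_le_one (hψ : ∀ x, 0 ≤ ψ x) (s : ℝ) : superlevelInf ψ φ s ≤ 1 :=
  csInf_le (bddBelow_insert_image hψ s) (Set.mem_insert _ _)

lemma superlevelInf_apply_le (hψ : ∀ x, 0 ≤ ψ x) (x : X) : superlevelInf ψ φ (φ x) ≤ ψ x :=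
  csInf_le (bddBelow_insert_image hψ _)
    (Set.mem_insert_of_mem _ (Set.mem_image_of_mem ψ (le_refl (φ x))))

lemma le_superlevelInf {c s : ℝ} (hc : c ≤ 1) (hcψ : ∀ x, s ≤ φ x → c ≤ ψ x) :
    c ≤ superlevelInf ψ φ s :=
  le_csInf (Set.insert_nonempty _ _) (by rintro _ (rfl | ⟨x, hx, rfl⟩) <;> simp_all)

lemma superlevelInf_nonneg (hψ : ∀ x, 0 ≤ ψ x) (s : ℝ) : 0 ≤ superlevelInf ψ φ s :=
  le_superlevelInf zero_le_one fun x _ => hψ x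

lemma monotone_superlevelInf (hψ : ∀ x, 0 ≤ ψ x) : Monotone (superlevelInf ψ φ) :=
  fun _ _ hst => csInf_le_csInf (bddBelow_insert_image hψ _) (Set.insert_nonempty _ _)
    (Set.insert_subset_insert (Set.image_mono fun _ hx => hst.trans hx))

lemma superlevelInf_pos {s : ℝ} (hs : ∃ c > 0, ∀ x, s ≤ φ x → c ≤ ψ x) :
    0 < superlevelInf ψ φ s := by
  obtain ⟨c, hc, hcψ⟩ := hs
  exact lt_of_lt_of_le (lt_min hc one_pos)
    (le_superlevelInf (min_le_right _ _) fun x hx => (min_le_left _ _).trans (hcψ x hx))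

end Superlevel

lemma exists_isCompact_forall_eq_add_intVec (n : ℕ) :
    ∃ K : Set (Eucl n), IsCompact K ∧ ∀ x, ∃ y ∈ K, ∃ k, x = y + intVec k := by
  refine ⟨WithLp.toLp 2 '' Set.Icc 0 1, isCompact_Icc.image (PiLp.continuous_toLp 2 _),
    fun x => ⟨WithLp.toLp 2 fun i => Int.fract (x i), ⟨_, ⟨fun i => Int.fract_nonneg _,
      fun i => (Int.fract_lt_one _).le⟩, rfl⟩, fun i => ⌊x i⌋, ?_⟩⟩
  ext i
  simp [intVec]

lemma IsZPeriodic.exists_pos_le {n : ℕ} {ψ φ : Eucl n → ℝ} (hψc : Continuous ψ)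
    (hφc : Continuous φ) (hψp : IsZPeriodic ψ) (hφp : IsZPeriodic φ)
    (hpos : ∀ x, 0 < φ x → 0 < ψ x) {s : ℝ} (hs : 0 < s) :
    ∃ c > 0, ∀ x, s ≤ φ x → c ≤ ψ x := by
  obtain ⟨K, hK, hKx⟩ := exists_isCompact_forall_eq_add_intVec n
  obtain ⟨c, hc, hcψ⟩ := (hK.inter_right (isClosed_le continuous_const hφc)).exists_forall_le'
    hψc.continuousOn fun y hy => hpos y (hs.trans_le hy.2)
  refine ⟨c, hc, fun x hx => ?_⟩
  obtain ⟨y, hyK, k, rfl⟩ := hKx x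
  rw [hφp] at hx
  rw [hψp]
  exact hcψ y ⟨hyK, hx⟩

section DampedPrimitive

open Real intervalIntegral

def dampedPrimitive (m : ℝ → ℝ) (s : ℝ) : ℝ :=
  ∫ t in (0 : ℝ)..s, m t * exp (-t)

variable {m : ℝ → ℝ}

lemma Monotone.intervalIntegrable_mul_exp_neg (hm : Monotone m) (a b : ℝ) :
    IntervalIntegrable (fun t => m t * exp (-t)) volume a b :=
  hm.intervalIntegrable.mul_continuousOn (by fun_prop)

@[simp]
lemma dampedPrimitive_zero (m : ℝ → ℝ) : dampedPrimitive m 0 = 0 :=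
  integral_same

lemma dampedPrimitive_nonpos (hm0 : ∀ t, 0 ≤ m t) {s : ℝ} (hs : s ≤ 0) :
    dampedPrimitive m s ≤ 0 := by
  rw [dampedPrimitive, integral_symm, neg_nonpos]
  exact integral_nonneg hs fun t _ => mul_nonneg (hm0 t) (exp_pos _).le

lemma dampedPrimitive_pos (hm : Monotone m) (hm_pos : ∀ t, 0 < t → 0 < m t) {s : ℝ}
    (hs : 0 < s) : 0 < dampedPrimitive m s :=
  intervalIntegral_pos_of_pos_on (hm.intervalIntegrable_mul_exp_neg 0 s)
    (fun t ht => mul_pos (hm_pos t ht.1) (exp_pos _)) hs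

lemma dampedPrimitive_le (hm : Monotone m) (hm0 : ∀ t, 0 ≤ m t) {s : ℝ} (hs : 0 ≤ s) :
    dampedPrimitive m s ≤ m s :=
  calc dampedPrimitive m s ≤ ∫ t in (0 : ℝ)..s, m s * exp (-t) :=
        integral_mono_on hs (hm.intervalIntegrable_mul_exp_neg 0 s)
          (Continuous.intervalIntegrable (by fun_prop) _ _)
          fun t ht => mul_le_mul_of_nonneg_right (hm ht.2) (exp_pos _).le
    _ = m s * (1 - exp (-s)) := by
        rw [intervalIntegral.integral_const_mul, integral_comp_neg (fun t => exp t), integral_exp]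
        simp
    _ ≤ m s := mul_le_of_le_one_right (hm0 s) (by linarith [exp_pos (-s)])

lemma lipschitzOnWith_dampedPrimitive (hm : Monotone m) (hm0 : ∀ t, 0 ≤ m t)
    (hm1 : ∀ t, m t ≤ 1) : LipschitzOnWith 1 (dampedPrimitive m) (Set.Ici 0) := by
  refine LipschitzOnWith.of_dist_le_mul fun s hs t ht => ?_
  rw [Real.dist_eq, Real.dist_eq, NNReal.coe_one, one_mul, dampedPrimitive, dampedPrimitive,
    integral_interval_sub_left (hm.intervalIntegrable_mul_exp_neg 0 s)
      (hm.intervalIntegrable_mul_exp_neg 0 t), ← Real.norm_eq_abs]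
  refine (intervalIntegral.norm_integral_le_of_norm_le_const fun u hu => ?_).trans_eq (one_mul _)
  have hu0 : 0 ≤ u := (le_min ht hs).trans (Set.uIoc_subset_uIcc hu).1
  rw [Real.norm_of_nonneg (mul_nonneg (hm0 u) (exp_pos _).le)]
  exact mul_le_one₀ (hm1 u) (exp_pos _).le (exp_le_one_iff.2 (neg_nonpos.2 hu0))

lemma ae_hasDerivAt_dampedPrimitive (hm : Monotone m) :
    ∀ᵐ s, HasDerivAt (dampedPrimitive m) (m s * exp (-s)) s := by
  have hcont : ∀ᵐ s, ContinuousAt m s := by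
    rw [ae_iff]
    exact hm.countable_not_continuousAt.measure_zero _
  filter_upwards [hcont] with s hs
  exact integral_hasDerivAt_right (hm.intervalIntegrable_mul_exp_neg 0 s)
    (hm.measurable.mul (by fun_prop)).stronglyMeasurable.stronglyMeasurableAtFilter
    (hs.mul (by fun_prop))

lemma ae_derivWithin_dampedPrimitive_pos (hm : Monotone m) (hm_pos : ∀ t, 0 < t → 0 < m t) :
    ∀ᵐ s ∂(volume.restrict (Set.Ioi (0 : ℝ))),
      0 < derivWithin (dampedPrimitive m) (Set.Ici 0) s := by
  rw [ae_restrict_iff' measurableSet_Ioi]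
  filter_upwards [ae_hasDerivAt_dampedPrimitive hm] with s hderiv hs
  rw [hderiv.hasDerivWithinAt.derivWithin (uniqueDiffOn_Ici 0 s (Set.mem_Ici.2 (le_of_lt hs)))]
  exact mul_pos (hm_pos s hs) (exp_pos _)

end DampedPrimitive

theorem lipschitz_ordering_general {n : ℕ} (ψ φ : Eucl n → ℝ) (Kψ Kφ : ℝ≥0)
    (hψl : LipschitzWith Kψ ψ) (hφl : LipschitzWith Kφ φ)
    (hψ0 : ∀ x, 0 ≤ ψ x)
    (hψp : IsZPeriodic ψ) (hφp : IsZPeriodic φ)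
    (hsub : {x | ψ x = 0} ⊆ {x | φ x = 0}) :
    ∃ (θ : ℝ → ℝ) (K : ℝ≥0), LipschitzOnWith K θ (Set.Ici 0) ∧
      θ 0 = 0 ∧ (∀ s : ℝ, 0 < s → 0 < θ s) ∧
      (∀ᵐ s ∂(volume.restrict (Set.Ioi (0 : ℝ))), 0 < derivWithin θ (Set.Ici 0) s) ∧
      ∀ x, θ (φ x) ≤ ψ x := by
  have hpos : ∀ x, 0 < φ x → 0 < ψ x := fun x hx =>
    (hψ0 x).lt_of_ne fun h => hx.ne' (hsub h.symm)
  have hm := monotone_superlevelInf (φ := φ) hψ0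
  have hm0 := superlevelInf_nonneg (φ := φ) hψ0
  have hm_pos : ∀ s, 0 < s → 0 < superlevelInf ψ φ s := fun s hs =>
    superlevelInf_pos (hψp.exists_pos_le hψl.continuous hφl.continuous hφp hpos hs)
  refine ⟨dampedPrimitive (superlevelInf ψ φ), 1,
    lipschitzOnWith_dampedPrimitive hm hm0 (superlevelInf_le_one hψ0), dampedPrimitive_zero _,
    fun s hs => dampedPrimitive_pos hm hm_pos hs, ae_derivWithin_dampedPrimitive_pos hm hm_pos,
    fun x => ?_⟩
  rcases le_total (φ x) 0 with hx | hx
  · exact (dampedPrimitive_nonpos hm0 hx).trans (hψ0 x)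
  · exact (dampedPrimitive_le hm hm0 hx).trans (superlevelInf_apply_le hψ0 x)

/-- Lipschitz ordering lemma. If `ψ, φ ≥ 0` are `ℤⁿ`-periodic Lipschitz
functions with `{ψ = 0} ⊆ {φ = 0}`, then there is a Lipschitz `θ : [0,∞) → [0,∞)` with
`θ(0) = 0`, `θ > 0` on `(0,∞)`, `θ' > 0` a.e., and `θ ∘ φ ≤ ψ`. -/
theorem lipschitz_ordering {n : ℕ} (ψ φ : Eucl n → ℝ) (Kψ Kφ : ℝ≥0)
    (hψl : LipschitzWith Kψ ψ) (hφl : LipschitzWith Kφ φ)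
    (hψ0 : ∀ x, 0 ≤ ψ x) (hφ0 : ∀ x, 0 ≤ φ x)
    (hψp : IsZPeriodic ψ) (hφp : IsZPeriodic φ)
    (hsub : {x | ψ x = 0} ⊆ {x | φ x = 0}) :
    ∃ (θ : ℝ → ℝ) (K : ℝ≥0), LipschitzOnWith K θ (Set.Ici 0) ∧
      θ 0 = 0 ∧ (∀ s : ℝ, 0 < s → 0 < θ s) ∧
      (∀ᵐ s ∂(volume.restrict (Set.Ioi (0 : ℝ))), 0 < derivWithin θ (Set.Ici 0) s) ∧
      ∀ x, θ (φ x) ≤ ψ x :=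
  lipschitz_ordering_general ψ φ Kψ Kφ hψl hφl hψ0 hψp hφp hsub
end
end

section
/- Let u, v : ℝⁿ → ℝ and M > 0 be such that u(x) − v(y) ≤ M for all x, y ∈ ℝⁿ, and assume m₀ := sup_{x ∈ ℝⁿ} (u(x) − v(x)) > 0. For ε > 0 and ζ ∈ ℝⁿ define Φ_ζ(x, y) := u(x) − v(y) − |x − y − ζ|²/(2ε) and ℓ(ζ) := sup_{x, y ∈ ℝⁿ} Φ_ζ(x, y). Then for every ε > 0 and every ζ with |ζ| ≤ √(m₀ ε): (i) ℓ(ζ) ≥ m₀/2; and (ii) every maximizer (x, y), i.e. every pair with Φ_ζ(x, y) = ℓ(ζ), satisfies |x − y| ≤ √(2Mε) + √(m₀ ε); in particular |x − y| ≤ C√ε with C := √(2M) + √(m₀) independent of ε and ζ. -/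
open MeasureTheory Filter
open scoped ENNReal NNReal RealInnerProductSpace

noncomputable section

/-- penalization estimate in the doubling-of-variables argument. -/
theorem doubling_penalty_estimate {n : ℕ} (u v : Eucl n → ℝ) (M : ℝ) (hM : 0 < M)
    (hbound : ∀ x y : Eucl n, u x - v y ≤ M)
    (m₀ : ℝ) (hm₀ : m₀ = sSup (Set.range fun x : Eucl n => u x - v x)) (hm₀pos : 0 < m₀)
    (ε : ℝ) (hε : 0 < ε)
    (ζ : Eucl n) (hζ : ‖ζ‖ ≤ Real.sqrt (m₀ * ε))
    (ℓζ : ℝ)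
    (hℓ : ℓζ = sSup (Set.range fun p : Eucl n × Eucl n =>
        u p.1 - v p.2 - ‖p.1 - p.2 - ζ‖ ^ 2 / (2 * ε))) :
    m₀ / 2 ≤ ℓζ ∧
    ∀ x y : Eucl n, u x - v y - ‖x - y - ζ‖ ^ 2 / (2 * ε) = ℓζ →
      ‖x - y‖ ≤ Real.sqrt (2 * M * ε) + Real.sqrt (m₀ * ε) ∧
      ‖x - y‖ ≤ (Real.sqrt (2 * M) + Real.sqrt m₀) * Real.sqrt ε := by
  have h2ε : 0 < 2 * ε := by linarith
  -- ‖ζ‖² ≤ m₀ ε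
  have hζ2 : ‖ζ‖ ^ 2 ≤ m₀ * ε := by
    have h1 : ‖ζ‖ ^ 2 ≤ Real.sqrt (m₀ * ε) ^ 2 :=
      pow_le_pow_left₀ (norm_nonneg _) hζ 2
    have h2 : Real.sqrt (m₀ * ε) ^ 2 = m₀ * ε :=
      Real.sq_sqrt (by positivity)
    linarith
  -- the Φ-range is bounded above by M
  have hbdd : BddAbove (Set.range fun p : Eucl n × Eucl n =>
      u p.1 - v p.2 - ‖p.1 - p.2 - ζ‖ ^ 2 / (2 * ε)) := by
    refine ⟨M, ?_⟩
    rintro r ⟨p, rfl⟩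
    have h1 : 0 ≤ ‖p.1 - p.2 - ζ‖ ^ 2 / (2 * ε) := by positivity
    have := hbound p.1 p.2
    simp only
    linarith
  -- each Φ value is ≤ ℓζ
  have hle : ∀ x y : Eucl n, u x - v y - ‖x - y - ζ‖ ^ 2 / (2 * ε) ≤ ℓζ := by
    intro x y
    rw [hℓ]
    exact le_csSup hbdd ⟨(x, y), rfl⟩
  -- part (i)
  have hpart1 : m₀ / 2 ≤ ℓζ := by
    have key : m₀ ≤ ℓζ + ‖ζ‖ ^ 2 / (2 * ε) := by
      rw [hm₀]
      apply Real.sSup_le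
      · rintro r ⟨x, rfl⟩
        have := hle x x
        have hxx : x - x - ζ = -ζ := by abel
        rw [hxx, norm_neg] at this
        simp only
        linarith
      · obtain ⟨r, ⟨x, rfl⟩, hr⟩ := exists_lt_of_lt_csSup
          (Set.range_nonempty (fun x : Eucl n => u x - v x)) (hm₀ ▸ hm₀pos)
        have := hle x x
        have hxx : x - x - ζ = -ζ := by abel
        rw [hxx, norm_neg] at this
        simp only at hr
        linarith
    have hc : ‖ζ‖ ^ 2 / (2 * ε) ≤ m₀ / 2 := by
      rw [div_le_div_iff₀ h2ε (by norm_num)]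
      nlinarith
    linarith
  refine ⟨hpart1, fun x y hxy => ?_⟩
  -- penalty bound at maximizer
  have hpen : ‖x - y - ζ‖ ^ 2 ≤ 2 * M * ε := by
    have h1 : ‖x - y - ζ‖ ^ 2 / (2 * ε) = u x - v y - ℓζ := by linarith
    have h2 : u x - v y - ℓζ ≤ M := by
      have := hbound x y; linarith
    have := (div_le_iff₀ h2ε).mp (h1 ▸ h2)
    linarith
  have hxyz : ‖x - y - ζ‖ ≤ Real.sqrt (2 * M * ε) := by
    have := Real.sqrt_le_sqrt hpen
    rwa [Real.sqrt_sq (norm_nonneg _)] at this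
  have hmain : ‖x - y‖ ≤ Real.sqrt (2 * M * ε) + Real.sqrt (m₀ * ε) := by
    have h1 : x - y = (x - y - ζ) + ζ := by abel
    calc ‖x - y‖ = ‖(x - y - ζ) + ζ‖ := by rw [← h1]
    _ ≤ ‖x - y - ζ‖ + ‖ζ‖ := norm_add_le _ _
    _ ≤ Real.sqrt (2 * M * ε) + Real.sqrt (m₀ * ε) := add_le_add hxyz hζ
  refine ⟨hmain, ?_⟩
  have e1 : Real.sqrt (2 * M * ε) = Real.sqrt (2 * M) * Real.sqrt ε :=
    Real.sqrt_mul (by positivity) ε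
  have e2 : Real.sqrt (m₀ * ε) = Real.sqrt m₀ * Real.sqrt ε :=
    Real.sqrt_mul (le_of_lt hm₀pos) ε
  calc ‖x - y‖ ≤ Real.sqrt (2 * M * ε) + Real.sqrt (m₀ * ε) := hmain
  _ = (Real.sqrt (2 * M) + Real.sqrt m₀) * Real.sqrt ε := by rw [e1, e2]; ring
end
end

section
/- Let u, v : ℝⁿ → ℝ be such that u − v is bounded above, let ε > 0, and for ζ ∈ ℝⁿ define Φ_ζ(x, y) := u(x) − v(y) − |x − y − ζ|²/(2ε) and ℓ(ζ) := sup_{x, y ∈ ℝⁿ} Φ_ζ(x, y). Let G ⊆ ℝⁿ be a closed ball. If for every ζ ∈ G there exists a pair (x, y) with Φ_ζ(x, y) = ℓ(ζ) and x − y − ζ = 0, then ℓ is constant on G, i.e. ℓ(ζ) = ℓ(μ) for all ζ, μ ∈ G. -/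
open MeasureTheory Filter
open scoped ENNReal NNReal RealInnerProductSpace

noncomputable section

/-- constancy lemma. If at every `ζ` in a closed ball `G` the
supremum `ℓ(ζ)` of `Φ_ζ` is attained at a pair with `x − y − ζ = 0`, then `ℓ` is
constant on `G`. -/
theorem constancy_lemma {n : ℕ} (u v : Eucl n → ℝ)
    (C : ℝ) (hb : ∀ x, u x - v x ≤ C)
    (ε : ℝ) (hε : 0 < ε)
    (ℓ : Eucl n → EReal)
    (hℓ : ∀ ζ, ℓ ζ = ⨆ p : Eucl n × Eucl n,
        ((u p.1 - v p.2 - ‖p.1 - p.2 - ζ‖ ^ 2 / (2 * ε) : ℝ) : EReal))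
    (G : Set (Eucl n)) (c : Eucl n) (rad : ℝ) (hG : G = Metric.closedBall c rad)
    (hmax : ∀ ζ ∈ G, ∃ x y : Eucl n,
        ((u x - v y - ‖x - y - ζ‖ ^ 2 / (2 * ε) : ℝ) : EReal) = ℓ ζ ∧ x - y - ζ = 0) :
    ∀ ζ ∈ G, ∀ μ ∈ G, ℓ ζ = ℓ μ := by
  -- On `G`, `ℓ` is real-valued.
  have hreal : ∀ ζ ∈ G, ℓ ζ = (((ℓ ζ).toReal : ℝ) : EReal) := by
    intro ζ hζ
    obtain ⟨x, y, heq, -⟩ := hmax ζ hζ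
    rw [← heq, EReal.toReal_coe]
  -- Key one-step estimate.
  have hkey : ∀ ζ ∈ G, ∀ μ ∈ G,
      (ℓ ζ).toReal ≤ (ℓ μ).toReal + ‖ζ - μ‖ ^ 2 / (2 * ε) := by
    intro ζ hζ μ hμ
    obtain ⟨x, y, heq, hxy⟩ := hmax ζ hζ
    have hxyζ : x - y = ζ := sub_eq_zero.mp hxy
    have h1 : (ℓ ζ).toReal = u x - v y := by
      rw [← heq, hxy, norm_zero, EReal.toReal_coe]
      simp
    have h2 : ((u x - v y - ‖x - y - μ‖ ^ 2 / (2 * ε) : ℝ) : EReal) ≤ ℓ μ := by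
      rw [hℓ μ]
      exact le_iSup (fun p : Eucl n × Eucl n =>
        ((u p.1 - v p.2 - ‖p.1 - p.2 - μ‖ ^ 2 / (2 * ε) : ℝ) : EReal)) (x, y)
    rw [hreal μ hμ] at h2
    have h3 : u x - v y - ‖x - y - μ‖ ^ 2 / (2 * ε) ≤ (ℓ μ).toReal :=
      EReal.coe_le_coe_iff.mp h2
    rw [hxyζ] at h3
    linarith
  -- One-sided comparison by chaining along the segment.
  have main : ∀ ζ ∈ G, ∀ μ ∈ G, (ℓ ζ).toReal ≤ (ℓ μ).toReal := by
    intro ζ hζ μ hμ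
    set d := ‖ζ - μ‖ with hd
    have hle : ∀ N : ℕ, 0 < N →
        (ℓ ζ).toReal ≤ (ℓ μ).toReal + d ^ 2 / (2 * ε) * (1 / N) := by
      intro N hN
      have hNpos : (0 : ℝ) < N := Nat.cast_pos.mpr hN
      set seg : ℕ → Eucl n := fun k => ζ + ((k : ℝ) / N) • (μ - ζ) with hseg
      have hsegG : ∀ k, k ≤ N → seg k ∈ G := by
        intro k hk
        have ht0 : (0 : ℝ) ≤ (k : ℝ) / N := by positivity
        have ht1 : (k : ℝ) / N ≤ 1 := by
          rw [div_le_one hNpos]; exact_mod_cast hk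
        have hconv := (convex_closedBall c rad) (hG ▸ hζ) (hG ▸ hμ)
          (sub_nonneg.mpr ht1) ht0 (by ring)
        rw [hG]
        have : (1 - (k : ℝ) / N) • ζ + ((k : ℝ) / N) • μ = seg k := by
          rw [hseg]; module
        rwa [this] at hconv
      have hstepnorm : ∀ k : ℕ, ‖seg k - seg (k + 1)‖ = d / N := by
        intro k
        have h : seg k - seg (k + 1) = (1 / (N : ℝ)) • (ζ - μ) := by
          simp only [hseg]
          push_cast
          rw [add_div]
          module
        rw [h, norm_smul, ← hd]
        rw [Real.norm_eq_abs, abs_of_nonneg (by positivity)]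
        field_simp
      have hind : ∀ k, k ≤ N →
          (ℓ ζ).toReal ≤ (ℓ (seg k)).toReal + k * ((d / N) ^ 2 / (2 * ε)) := by
        intro k
        induction k with
        | zero =>
          intro _
          have : seg 0 = ζ := by simp [hseg]
          rw [this]
          norm_num
        | succ k ih =>
          intro hk
          have hk' : k ≤ N := Nat.le_of_succ_le hk
          have h1 := ih hk'
          have h2 := hkey (seg k) (hsegG k hk') (seg (k + 1)) (hsegG (k + 1) hk)
          rw [hstepnorm k] at h2
          push_cast
          linarith
      have hNfin := hind N le_rfl
      have hsegN : seg N = μ := by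
        rw [hseg]
        simp only
        rw [div_self hNpos.ne', one_smul]
        abel
      rw [hsegN] at hNfin
      have harith : (N : ℝ) * ((d / N) ^ 2 / (2 * ε)) = d ^ 2 / (2 * ε) * (1 / N) := by
        field_simp
      linarith [hNfin, harith.le, harith.ge]
    have hten : Tendsto (fun N : ℕ => (ℓ μ).toReal + d ^ 2 / (2 * ε) * (1 / N))
        atTop (nhds ((ℓ μ).toReal + d ^ 2 / (2 * ε) * 0)) :=
      tendsto_const_nhds.add (tendsto_const_nhds.mul tendsto_one_div_atTop_nhds_zero_nat)
    rw [mul_zero, add_zero] at hten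
    refine ge_of_tendsto hten ?_
    filter_upwards [eventually_gt_atTop 0] with N hN using hle N hN
  intro ζ hζ μ hμ
  rw [hreal ζ hζ, hreal μ hμ]
  exact_mod_cast le_antisymm (main ζ hζ μ hμ) (main μ hμ ζ hζ)
end
end

section
/- Let n ≥ 1, let α, β ∈ ℝ, and let σ° : ℝⁿ → ℝ be positively one-homogeneous (σ°(λx) = λσ°(x) for all λ > 0 and x ∈ ℝⁿ), positive on ℝⁿ ∖ {0}, and differentiable at every x ≠ 0. Then the vector field F(x) := (α σ°(x)^{−n} + β) x is differentiable on ℝⁿ ∖ {0}, and its divergence, i.e. the trace of its Fréchet derivative, satisfies div F(x) = n β for every x ≠ 0. -/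
/-! Write the field as `g y • y` with `g = α σ°^(-n) + β`. Its derivative at `x` is
`g x • id + (Dg x).smulRight x`, of trace `n g(x) + Dg(x) x`. As `σ°^(-n)` is homogeneous of
degree `-n`, Euler's identity gives `Dg(x) x = -n α σ°(x)^(-n)`, cancelling the `α`-part of
`n g(x)`. -/

open MeasureTheory Filter
open scoped ENNReal NNReal RealInnerProductSpace

noncomputable section

theorem HasFDerivAt.apply_self_of_homogeneous {E F : Type*} [NormedAddCommGroup E]
    [NormedSpace ℝ E] [NormedAddCommGroup F] [NormedSpace ℝ F] {f : E → F} {f' : E →L[ℝ] F}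
    {x : E} {k : ℤ} (hhom : ∀ c : ℝ, 0 < c → f (c • x) = c ^ k • f x)
    (hf : HasFDerivAt f f' x) : f' x = (k : ℝ) • f x := by
  have hray : HasDerivAt (fun t : ℝ => f (t • x)) (f' x) 1 :=
    hf.comp_hasDerivAt_of_eq 1 (by simpa using (hasDerivAt_id (1 : ℝ)).smul_const x)
      (one_smul ℝ x).symm
  have hpow : HasDerivAt (fun t : ℝ => t ^ k • f x) ((k : ℝ) • f x) 1 := by
    simpa using (hasDerivAt_zpow k (1 : ℝ) (Or.inl one_ne_zero)).smul_const (f x)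
  have hnear : (fun t : ℝ => f (t • x)) =ᶠ[nhds 1] fun t => t ^ k • f x := by
    filter_upwards [eventually_gt_nhds one_pos] with t ht using hhom t ht
  exact (hray.congr_of_eventuallyEq hnear.symm).unique hpow

theorem HasFDerivAt.trace_fderiv_smul_self {𝕜 E : Type*} [NontriviallyNormedField 𝕜]
    [NormedAddCommGroup E] [NormedSpace 𝕜 E] [FiniteDimensional 𝕜 E] {g : E → 𝕜}
    {g' : E →L[𝕜] 𝕜} {x : E} (hg : HasFDerivAt g g' x) :
    LinearMap.trace 𝕜 E (fderiv 𝕜 (fun y => g y • y) x : E →ₗ[𝕜] E)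
      = Module.finrank 𝕜 E * g x + g' x := by
  have hF : HasFDerivAt (fun y => g y • y)
      (g x • ContinuousLinearMap.id 𝕜 E + g'.smulRight x) x :=
    hg.smul (hasFDerivAt_id x)
  rw [hF.fderiv]
  simp [ContinuousLinearMap.coe_smulRight, mul_comm]

theorem div_interpolating_field_general {n : ℕ} (α β : ℝ) (σp : Eucl n → ℝ)
    (hhom : ∀ c : ℝ, 0 < c → ∀ x, σp (c • x) = c * σp x)
    (hpos : ∀ x : Eucl n, x ≠ 0 → 0 < σp x)
    (hdiff : ∀ x : Eucl n, x ≠ 0 → DifferentiableAt ℝ σp x) :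
    ∀ x : Eucl n, x ≠ 0 →
      DifferentiableAt ℝ (fun y : Eucl n => (α * ((σp y) ^ n)⁻¹ + β) • y) x ∧
      LinearMap.trace ℝ (Eucl n)
          (fderiv ℝ (fun y : Eucl n => (α * ((σp y) ^ n)⁻¹ + β) • y) x :
            Eucl n →ₗ[ℝ] Eucl n)
        = n * β := by
  intro x hx
  set h : Eucl n → ℝ := fun y => σp y ^ (-(n : ℤ))
  have hfield :
      (fun y : Eucl n => (α * ((σp y) ^ n)⁻¹ + β) • y) = fun y => (α * h y + β) • y := by
    simp [h, zpow_neg]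
  have hh : HasFDerivAt h (fderiv ℝ h x) x :=
    ((hdiff x hx).zpow (Or.inl (hpos x hx).ne')).hasFDerivAt
  have heuler := hh.apply_self_of_homogeneous (k := -n) fun c hc => by
    simp only [h, hhom c hc, mul_zpow, smul_eq_mul]
  have hg := (hh.const_mul α).add_const β
  rw [hfield]
  refine ⟨(hg.smul (hasFDerivAt_id x)).differentiableAt, ?_⟩
  rw [hg.trace_fderiv_smul_self, finrank_euclideanSpace_fin]
  simp only [smul_apply, smul_eq_mul, heuler]
  push_cast
  ring

/-- Divergence of the interpolating Cahn–Hoffman field: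
for positively one-homogeneous `σ°` positive and differentiable away from `0`,
`div ((α σ°(x)^{−n} + β) x) = n β` for `x ≠ 0`. -/
theorem div_interpolating_field {n : ℕ} (hn : 1 ≤ n) (α β : ℝ) (σp : Eucl n → ℝ)
    (hhom : ∀ c : ℝ, 0 < c → ∀ x, σp (c • x) = c * σp x)
    (hpos : ∀ x : Eucl n, x ≠ 0 → 0 < σp x)
    (hdiff : ∀ x : Eucl n, x ≠ 0 → DifferentiableAt ℝ σp x) :
    ∀ x : Eucl n, x ≠ 0 →
      DifferentiableAt ℝ (fun y : Eucl n => (α * ((σp y) ^ n)⁻¹ + β) • y) x ∧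
      LinearMap.trace ℝ (Eucl n)
          (fderiv ℝ (fun y : Eucl n => (α * ((σp y) ^ n)⁻¹ + β) • y) x :
            Eucl n →ₗ[ℝ] Eucl n)
        = n * β :=
  div_interpolating_field_general α β σp hhom hpos hdiff
end
end
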